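/- arXiv:math/0505368 — 4 statements merged into one kernel-verified Lean document; each statement's English description precedes it below -/
import Mathlib

section
/- Let W : [0,∞) → ℝ be continuous, and for z in the upper half plane ℍ let g_t(z) denote the maximal solution of the chordal Loewner equation with lifetime τ_z. For each t ≥ 0 the set H_t = {z ∈ ℍ : τ_z > t} is open, and the map z ↦ g_t(z) is holomorphic and injective on H_t, with g_t(H_t) ⊆ ℍ. -/
/-!
Two trajectories of the Loewner flow satisfy the linear equation
`∂ₜ(gₜ z - gₜ w) = -2 (gₜ z - gₜ w) / ((gₜ z - Wₜ)(gₜ w - Wₜ))`, so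
`gₜ z - gₜ w = (z - w) exp ∫₀ᵗ …` never vanishes for `z ≠ w`: this is injectivity. In the same
way `Im gₜ z = Im z · exp ∫₀ᵗ -2 / |gₛ z - Wₛ|²` stays positive.
If `gₛ z` stays at distance `≥ 2δ` from `Wₛ` up to time `t`, the exponential formula bounds
`|gₛ w - gₛ z|` by `e^{2t/δ²} |w - z|` for as long as `gₛ w` stays at distance `≥ δ` from `Wₛ`.
Since a trajectory cannot reach its lifetime while staying away from `W`, a continuity argument
shows that for `w` close to `z` this holds up to time `t`. This gives openness, and letting
`w → z` in the exponential formula gives the complex derivative `exp ∫₀ᵗ -2 / (gₛ z - Wₛ)²`.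
-/

open Set Filter Topology
open scoped ENNReal

theorem Icc_subset_of_forall_mem_of_Ico_subset {α : Type*} [ConditionallyCompleteLinearOrder α]
    [TopologicalSpace α] [OrderTopology α] [DenselyOrdered α] {a b : α} {s : Set α}
    (ha : a ∈ s) (hlim : ∀ x ∈ Ioc a b, Ico a x ⊆ s → x ∈ s)
    (hstep : ∀ x ∈ Ico a b, Icc a x ⊆ s → s ∈ 𝓝[>] x) : Icc a b ⊆ s := by
  have hmem : ∀ x, a ≤ x → x ≤ b → Ico a x ⊆ s → x ∈ s := fun x hax hxb hx =>
    hax.eq_or_lt.elim (· ▸ ha) fun h => hlim x ⟨h, hxb⟩ hx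
  have hclosed : IsClosed {x | Ico a x ⊆ s} := by
    have : {x | Ico a x ⊆ s} = ⋂ y ∈ Ici a \ s, Iic y := by
      ext x
      simp only [mem_ofPred_eq, mem_iInter, Set.mem_sdiff, mem_Ici, mem_Iic, subset_def, mem_Ico]
      exact ⟨fun h y hy => not_lt.1 fun hyx => hy.2 (h y ⟨hy.1, hyx⟩),
        fun h y hy => by_contra fun hys => (h y ⟨hy.1, hys⟩).not_gt hy.2⟩
    rw [this]
    exact isClosed_biInter fun y _ => isClosed_Iic
  intro x hx
  refine hmem x hx.1 hx.2 ((hclosed.inter isClosed_Icc).Icc_subset_of_forall_mem_nhdsWithin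
    (by simp) (fun y hy => ?_) hx)
  have hys : Icc a y ⊆ s := Ico_union_right hy.2.1 ▸
    union_subset hy.1 (singleton_subset_iff.2 (hmem y hy.2.1 hy.2.2.le hy.1))
  obtain ⟨m, hym, hm⟩ := (mem_nhdsGT_iff_exists_Ioo_subset' hy.2.2).1 (hstep y hy.2 hys)
  refine (mem_nhdsGT_iff_exists_Ioo_subset' hy.2.2).2 ⟨m, hym, fun u hu v hv => ?_⟩
  exact (le_or_gt v y).elim (fun hvy => hys ⟨hv.1, hvy⟩) fun hyv => hm ⟨hyv, hv.2.trans hu.2⟩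

theorem eq_mul_exp_integral_of_hasDerivWithinAt {f c : ℝ → ℂ} {a b : ℝ} (hab : a ≤ b)
    (hf : ContinuousOn f (Icc a b)) (hc : ContinuousOn c (Icc a b))
    (hder : ∀ s ∈ Ico a b, HasDerivWithinAt f (c s * f s) (Ici s) s) :
    f b = f a * Complex.exp (∫ s in a..b, c s) := by
  set c' : ℝ → ℂ := fun u => c (projIcc a b hab u)
  have hc'c : EqOn c' c (Icc a b) := fun u hu => by simp [c', projIcc_of_mem hab hu]
  have hc' : Continuous c' :=
    hc.comp_continuous (continuous_subtype_val.comp continuous_projIcc) fun u =>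
      (projIcc a b hab u).2
  have hA (s : ℝ) : HasDerivAt (fun s => ∫ u in a..s, c' u) (c' s) s :=
    intervalIntegral.integral_hasDerivAt_right (hc'.intervalIntegrable _ _)
      (hc'.stronglyMeasurableAtFilter _ _) hc'.continuousAt
  set φ : ℝ → ℂ := fun s => f s * Complex.exp (-∫ u in a..s, c' u)
  have hφ : ContinuousOn φ (Icc a b) :=
    hf.mul (continuous_iff_continuousAt.2 fun s => (hA s).continuousAt).neg.cexp.continuousOn
  have hφ' (s : ℝ) (hs : s ∈ Ico a b) : HasDerivWithinAt φ 0 (Ici s) s := by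
    refine ((hder s hs).mul (hA s).hasDerivWithinAt.neg.cexp).congr_deriv ?_
    rw [hc'c ⟨hs.1, hs.2.le⟩]
    ring
  have hφb := constant_of_has_deriv_right_zero hφ hφ' b (right_mem_Icc.2 hab)
  simp only [φ, intervalIntegral.integral_same, Complex.exp_zero, inv_one, mul_one,
    intervalIntegral.integral_congr (hc'c.mono (uIcc_of_le hab).subset), Complex.exp_neg] at hφb
  rw [← hφb, inv_mul_cancel_right₀ (Complex.exp_ne_zero _)]

lemma ofReal_lt_of_le_of_lt {x y : ℝ} {T : ℝ≥0∞} (hxy : x ≤ y) (hy : ENNReal.ofReal y < T) :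
    ENNReal.ofReal x < T :=
  (ENNReal.ofReal_le_ofReal hxy).trans_lt hy

section LoewnerFlow

variable {W : ℝ → ℝ} {g : ℝ → ℂ → ℂ} {τ : ℂ → ℝ≥0∞}
  (hW : ContinuousOn W (Ici 0))
  (hτpos : ∀ z : ℂ, 0 < z.im → 0 < τ z)
  (hg0 : ∀ z : ℂ, 0 < z.im → g 0 z = z)
  (hode : ∀ z : ℂ, 0 < z.im → ∀ t : ℝ, 0 ≤ t → ENNReal.ofReal t < τ z →
    g t z ≠ (W t : ℂ) ∧ HasDerivWithinAt (fun s => g s z) (2 / (g t z - (W t : ℂ))) (Ici 0) t)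
  (hmax : ∀ z : ℂ, 0 < z.im → τ z ≠ ⊤ →
    Tendsto (fun t : ℝ => g t z - (W t : ℂ)) (𝓝[<] (τ z).toReal) (𝓝 0))

include hode

lemma continuousOn_flow {z : ℂ} (hz : 0 < z.im) {t : ℝ} (hτ : ENNReal.ofReal t < τ z) :
    ContinuousOn (fun s => g s z) (Icc 0 t) := fun s hs =>
  ((hode z hz s hs.1 (ofReal_lt_of_le_of_lt hs.2 hτ)).2.continuousWithinAt).mono
    Icc_subset_Ici_self

lemma flow_sub_driving_ne_zero {z : ℂ} (hz : 0 < z.im) {t : ℝ} (hτ : ENNReal.ofReal t < τ z)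
    ⦃s : ℝ⦄ (hs : s ∈ Icc 0 t) : g s z - W s ≠ 0 :=
  sub_ne_zero.2 (hode z hz s hs.1 (ofReal_lt_of_le_of_lt hs.2 hτ)).1

include hW in
lemma continuousOn_flow_sub_driving {z : ℂ} (hz : 0 < z.im) {t : ℝ}
    (hτ : ENNReal.ofReal t < τ z) : ContinuousOn (fun s => g s z - W s) (Icc 0 t) :=
  (continuousOn_flow hode hz hτ).sub
    (Complex.continuous_ofReal.comp_continuousOn (hW.mono Icc_subset_Ici_self))

include hW hg0 in
lemma flow_sub_flow_eq {z w : ℂ} (hz : 0 < z.im) (hw : 0 < w.im) {t : ℝ} (ht : 0 ≤ t)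
    (hτz : ENNReal.ofReal t < τ z) (hτw : ENNReal.ofReal t < τ w) :
    g t z - g t w = (z - w) *
      Complex.exp (∫ s in (0 : ℝ)..t, -2 / ((g s z - W s) * (g s w - W s))) := by
  have hA := flow_sub_driving_ne_zero hode hz hτz
  have hB := flow_sub_driving_ne_zero hode hw hτw
  have hformula := eq_mul_exp_integral_of_hasDerivWithinAt (f := fun s => g s z - g s w)
    (c := fun s => -2 / ((g s z - W s) * (g s w - W s))) ht
    ((continuousOn_flow hode hz hτz).sub (continuousOn_flow hode hw hτw))
    (continuousOn_const.div ((continuousOn_flow_sub_driving hW hode hz hτz).mul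
      (continuousOn_flow_sub_driving hW hode hw hτw)) fun s hs => mul_ne_zero (hA hs) (hB hs))
    fun s hs => ?_
  · rwa [hg0 z hz, hg0 w hw] at hformula
  have hAs := hA (Ico_subset_Icc_self hs)
  have hBs := hB (Ico_subset_Icc_self hs)
  refine (((hode z hz s hs.1 (ofReal_lt_of_le_of_lt hs.2.le hτz)).2.sub
    (hode w hw s hs.1 (ofReal_lt_of_le_of_lt hs.2.le hτw)).2).mono
      (Ici_subset_Ici.2 hs.1)).congr_deriv ?_
  field_simp
  ring

include hW hg0 in
lemma im_flow_eq {z : ℂ} (hz : 0 < z.im) {t : ℝ} (ht : 0 ≤ t) (hτ : ENNReal.ofReal t < τ z) :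
    (g t z).im = z.im * Real.exp (∫ s in (0 : ℝ)..t, -2 / Complex.normSq (g s z - W s)) := by
  have hA := flow_sub_driving_ne_zero hode hz hτ
  have hformula := eq_mul_exp_integral_of_hasDerivWithinAt (f := fun s => ((g s z).im : ℂ))
    (c := fun s => ((-2 / Complex.normSq (g s z - W s) : ℝ) : ℂ)) ht
    (Complex.continuous_ofReal.comp_continuousOn
      (Complex.continuous_im.comp_continuousOn (continuousOn_flow hode hz hτ)))
    (Complex.continuous_ofReal.comp_continuousOn (continuousOn_const.div
      (Complex.continuous_normSq.comp_continuousOn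
        (continuousOn_flow_sub_driving hW hode hz hτ))
      fun s hs => Complex.normSq_pos.2 (hA hs) |>.ne')) fun s hs => ?_
  · rw [hg0 z hz, intervalIntegral.integral_ofReal, ← Complex.ofReal_exp,
      ← Complex.ofReal_mul] at hformula
    exact_mod_cast hformula
  have hderiv := (hode z hz s hs.1 (ofReal_lt_of_le_of_lt hs.2.le hτ)).2
  refine ((Complex.imCLM.hasFDerivAt.comp_hasDerivWithinAt s hderiv).ofReal_comp.mono
    (Ici_subset_Ici.2 hs.1)).congr_deriv ?_
  simp only [Complex.imCLM_apply, Complex.div_im, Complex.im_ofNat, Complex.re_ofNat,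
    Complex.sub_im, Complex.ofReal_im, sub_zero, zero_mul, zero_div]
  push_cast
  ring

include hW hg0 in
lemma norm_flow_sub_flow_le {z w : ℂ} (hz : 0 < z.im) (hw : 0 < w.im) {t : ℝ} (ht : 0 ≤ t)
    (hτz : ENNReal.ofReal t < τ z) (hτw : ENNReal.ofReal t < τ w) {a : ℝ} (ha : 0 < a)
    (haz : ∀ s ∈ Icc 0 t, a ≤ ‖g s z - W s‖) (haw : ∀ s ∈ Icc 0 t, a ≤ ‖g s w - W s‖) :
    ‖g t z - g t w‖ ≤ Real.exp (2 / a ^ 2 * t) * ‖z - w‖ := by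
  set I := ∫ s in (0 : ℝ)..t, -2 / ((g s z - W s) * (g s w - W s))
  have hI : ‖I‖ ≤ 2 / a ^ 2 * |t - 0| := by
    refine intervalIntegral.norm_integral_le_of_norm_le_const fun s hs => ?_
    have hs' : s ∈ Icc 0 t := Ioc_subset_Icc_self (uIoc_of_le ht ▸ hs)
    rw [norm_div, norm_neg, norm_mul, Complex.norm_ofNat, sq]
    gcongr
    exacts [haz s hs', haw s hs']
  calc ‖g t z - g t w‖ = Real.exp I.re * ‖z - w‖ := by
        rw [flow_sub_flow_eq hW hg0 hode hz hw ht hτz hτw, norm_mul, Complex.norm_exp,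
          mul_comm]
    _ ≤ Real.exp (2 / a ^ 2 * t) * ‖z - w‖ := by
        gcongr
        rw [sub_zero, abs_of_nonneg ht] at hI
        exact (Complex.re_le_norm I).trans hI

omit hode in
include hmax in
lemma ofReal_lt_tau_of_forall_le_norm {z : ℂ} (hz : 0 < z.im) (hτ : 0 < τ z) {σ a : ℝ}
    (ha : 0 < a) (hbd : ∀ s ∈ Ico 0 σ, a ≤ ‖g s z - W s‖) : ENNReal.ofReal σ < τ z := by
  by_contra! hle
  have hτne : τ z ≠ ⊤ := (hle.trans_lt ENNReal.ofReal_lt_top).ne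
  have hT : 0 < (τ z).toReal := ENNReal.toReal_pos hτ.ne' hτne
  have hσ : 0 ≤ σ := not_lt.1 fun h => hτ.not_ge (hle.trans_eq (ENNReal.ofReal_of_nonpos h.le))
  have hTσ : (τ z).toReal ≤ σ := ENNReal.toReal_le_of_le_ofReal hσ hle
  obtain ⟨s, hsa, hs⟩ := ((hmax z hz hτne).norm.eventually
    (gt_mem_nhds (by simpa using ha))).and (Ioo_mem_nhdsLT hT) |>.exists
  exact (hsa.trans_le (by simpa using hbd s ⟨hs.1.le, hs.2.trans_le hTσ⟩)).false

include hW hτpos hg0 hmax in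
lemma flow_stays_near {z₀ z : ℂ} (hz₀ : 0 < z₀.im) (hz : 0 < z.im) {t : ℝ} (ht : 0 ≤ t)
    (hτ₀ : ENNReal.ofReal t < τ z₀) {δ : ℝ} (hδ : 0 < δ)
    (hz₀δ : ∀ s ∈ Icc 0 t, 2 * δ ≤ ‖g s z₀ - W s‖)
    (hzz₀ : Real.exp (2 / δ ^ 2 * t) * ‖z - z₀‖ < δ) :
    ENNReal.ofReal t < τ z ∧ ∀ s ∈ Icc 0 t,
      ‖g s z - g s z₀‖ ≤ Real.exp (2 / δ ^ 2 * t) * ‖z - z₀‖ ∧ δ ≤ ‖g s z - W s‖ := by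
  set C := Real.exp (2 / δ ^ 2 * t)
  have hlow (s : ℝ) (hs : s ∈ Icc 0 t) (hnear : ‖g s z - g s z₀‖ < δ) :
      δ ≤ ‖g s z - W s‖ := by
    have := norm_sub_le (g s z - W s) (g s z - g s z₀)
    rw [sub_sub_sub_cancel_left] at this
    linarith [hz₀δ s hs]
  have hbound (x : ℝ) (hx : x ∈ Icc 0 t) (hτx : ENNReal.ofReal x < τ z)
      (hδx : ∀ s ∈ Icc 0 x, δ ≤ ‖g s z - W s‖) : ‖g x z - g x z₀‖ ≤ C * ‖z - z₀‖ := by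
    refine (norm_flow_sub_flow_le hW hg0 hode hz hz₀ hx.1 hτx
      (ofReal_lt_of_le_of_lt hx.2 hτ₀) hδ hδx fun s hs => ?_).trans ?_
    · linarith [hz₀δ s ⟨hs.1, hs.2.trans hx.2⟩]
    · exact mul_le_mul_of_nonneg_right
        (Real.exp_le_exp.2 (mul_le_mul_of_nonneg_left hx.2 (by positivity))) (norm_nonneg _)
  have hgood : Icc 0 t ⊆ {s | ENNReal.ofReal s < τ z ∧ ‖g s z - g s z₀‖ < δ} := by
    refine Icc_subset_of_forall_mem_of_Ico_subset ⟨?_, ?_⟩ (fun x hx hsub => ?_)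
      (fun x hx hsub => ?_)
    · simpa using hτpos z hz
    · rw [hg0 z hz, hg0 z₀ hz₀]
      exact (le_mul_of_one_le_left (norm_nonneg _) (Real.one_le_exp (by positivity))).trans_lt
        hzz₀
    · have hδx : ∀ s ∈ Ico 0 x, δ ≤ ‖g s z - W s‖ := fun s hs =>
        hlow s ⟨hs.1, hs.2.le.trans hx.2⟩ (hsub hs).2
      have hτx := ofReal_lt_tau_of_forall_le_norm hmax hz (hτpos z hz) hδ hδx
      have hcl := closure_Ico hx.1.ne
      have hδx' : ∀ s ∈ Icc 0 x, δ ≤ ‖g s z - W s‖ := fun s hs =>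
        le_on_closure hδx continuousOn_const
          (hcl ▸ (continuousOn_flow_sub_driving hW hode hz hτx).norm) (hcl ▸ hs)
      exact ⟨hτx, (hbound x ⟨hx.1.le, hx.2⟩ hτx hδx').trans_lt hzz₀⟩
    · obtain ⟨hτx, hnear⟩ := hsub ⟨hx.1, le_rfl⟩
      have hτ : ∀ᶠ s in 𝓝 x, ENNReal.ofReal s < τ z :=
        ENNReal.continuous_ofReal.continuousAt.eventually_lt continuousAt_const hτx
      have hcont : ContinuousWithinAt (fun s => g s z - g s z₀) (Ici x) x :=
        ((hode z hz x hx.1 hτx).2.sub (hode z₀ hz₀ x hx.1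
          (ofReal_lt_of_le_of_lt hx.2.le hτ₀)).2).continuousWithinAt.mono
            (Ici_subset_Ici.2 hx.1)
      exact (hτ.filter_mono nhdsWithin_le_nhds).and
        (nhdsWithin_mono _ Ioi_subset_Ici_self (hcont.norm.eventually (gt_mem_nhds hnear)))
  refine ⟨(hgood ⟨ht, le_rfl⟩).1, fun s hs => ?_⟩
  have hδs : ∀ u ∈ Icc 0 s, δ ≤ ‖g u z - W u‖ := fun u hu =>
    hlow u ⟨hu.1, hu.2.trans hs.2⟩ (hgood ⟨hu.1, hu.2.trans hs.2⟩).2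
  exact ⟨hbound s hs (hgood hs).1 hδs, hδs s ⟨hs.1, le_rfl⟩⟩

include hW hτpos hg0 hmax in
lemma eventually_flow_near {t : ℝ} (ht : 0 ≤ t) {z₀ : ℂ} (hz₀ : 0 < z₀.im)
    (hτ₀ : ENNReal.ofReal t < τ z₀) :
    ∃ δ > 0, ∃ C : ℝ, ∀ᶠ z in 𝓝 z₀, 0 < z.im ∧ ENNReal.ofReal t < τ z ∧
      ∀ s ∈ Icc 0 t, ‖g s z - g s z₀‖ ≤ C * ‖z - z₀‖ ∧ δ ≤ ‖g s z - W s‖ := by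
  obtain ⟨s₀, hs₀, hmin⟩ := isCompact_Icc.exists_isMinOn (nonempty_Icc.2 ht)
    (continuousOn_flow_sub_driving hW hode hz₀ hτ₀).norm
  set δ := ‖g s₀ z₀ - W s₀‖ / 2 with hδdef
  have hδ : 0 < δ := half_pos (norm_pos_iff.2 (flow_sub_driving_ne_zero hode hz₀ hτ₀ hs₀))
  refine ⟨δ, hδ, Real.exp (2 / δ ^ 2 * t), ?_⟩
  have hnear : ∀ᶠ z in 𝓝 z₀, Real.exp (2 / δ ^ 2 * t) * ‖z - z₀‖ < δ :=
    (continuousAt_const.mul (continuousAt_id.sub continuousAt_const).norm).eventually_lt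
      continuousAt_const (by simpa using hδ)
  filter_upwards [continuousAt_const.eventually_lt Complex.continuous_im.continuousAt hz₀,
    hnear] with z hz hzz₀
  exact ⟨hz, flow_stays_near hW hτpos hg0 hode hmax hz₀ hz ht hτ₀ hδ
    (fun s hs => by linarith [isMinOn_iff.1 hmin s hs]) hzz₀⟩

include hW hτpos hg0 hmax in
lemma hasDerivAt_flow {t : ℝ} (ht : 0 ≤ t) {z₀ : ℂ} (hz₀ : 0 < z₀.im)
    (hτ₀ : ENNReal.ofReal t < τ z₀) :
    HasDerivAt (g t) (Complex.exp (∫ s in (0 : ℝ)..t, -2 / (g s z₀ - W s) ^ 2)) z₀ := by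
  obtain ⟨δ, hδ, C, hnear⟩ := eventually_flow_near hW hτpos hg0 hode hmax ht hz₀ hτ₀
  set c : ℂ → ℝ → ℂ := fun z s => -2 / ((g s z - W s) * (g s z₀ - W s))
  have hne (z : ℂ) (hz : ∀ s ∈ Icc 0 t, ‖g s z - g s z₀‖ ≤ C * ‖z - z₀‖ ∧ δ ≤ ‖g s z - W s‖)
      (s : ℝ) (hs : s ∈ Icc 0 t) : g s z - W s ≠ 0 :=
    norm_pos_iff.1 (hδ.trans_le (hz s hs).2)
  have hz₀near := (mem_of_mem_nhds hnear).2.2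
  have hcont_flow (s : ℝ) (hs : s ∈ Icc 0 t) : ContinuousAt (fun z => g s z) z₀ := by
    refine tendsto_iff_norm_sub_tendsto_zero.2 (squeeze_zero' (Eventually.of_forall fun _ =>
      norm_nonneg _) (hnear.mono fun z hz => (hz.2.2 s hs).1) ?_)
    simpa using ((continuous_id.sub (continuous_const (y := z₀))).norm.const_mul C).tendsto z₀
  have hcont : ContinuousAt (fun z => ∫ s in (0 : ℝ)..t, c z s) z₀ := by
    refine intervalIntegral.continuousAt_of_dominated_interval (bound := fun _ => 2 / δ ^ 2)
      ?_ ?_ intervalIntegrable_const (Eventually.of_forall fun s hs => ?_)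
    · filter_upwards [hnear] with z hz
      rw [uIoc_of_le ht]
      refine ((continuousOn_const.div ((continuousOn_flow_sub_driving hW hode hz.1 hz.2.1).mul
        (continuousOn_flow_sub_driving hW hode hz₀ hτ₀)) fun s hs => mul_ne_zero
          (hne z hz.2.2 s hs) (hne z₀ hz₀near s hs)).mono Ioc_subset_Icc_self).aestronglyMeasurable
        measurableSet_Ioc
    · filter_upwards [hnear] with z hz
      refine Eventually.of_forall fun s hs => ?_
      have hs' : s ∈ Icc 0 t := Ioc_subset_Icc_self (uIoc_of_le ht ▸ hs)
      rw [norm_div, norm_neg, norm_mul, Complex.norm_ofNat, sq]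
      gcongr
      exacts [(hz.2.2 s hs').2, (hz₀near s hs').2]
    · have hs' : s ∈ Icc 0 t := Ioc_subset_Icc_self (uIoc_of_le ht ▸ hs)
      exact continuousAt_const.div (((hcont_flow s hs').sub continuousAt_const).mul
        continuousAt_const) (mul_ne_zero (hne z₀ hz₀near s hs') (hne z₀ hz₀near s hs'))
  have hslope :
      slope (g t) z₀ =ᶠ[𝓝[≠] z₀] fun z => Complex.exp (∫ s in (0 : ℝ)..t, c z s) := by
    filter_upwards [nhdsWithin_le_nhds hnear, self_mem_nhdsWithin] with z hz hzz₀
    rw [slope_def_field, flow_sub_flow_eq hW hg0 hode hz.1 hz₀ ht hz.2.1 hτ₀,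
      mul_div_cancel_left₀ _ (sub_ne_zero.2 hzz₀)]
  rw [hasDerivAt_iff_tendsto_slope]
  simp_rw [sq]
  exact ((Complex.continuous_exp.continuousAt.comp hcont).tendsto.mono_left
    nhdsWithin_le_nhds).congr' hslope.symm

end LoewnerFlow

/-- For the chordal Loewner flow `g t z` with continuous real driving term `W`
(maximal solutions with lifetimes `τ z`), for each `t ≥ 0` the set
`H_t = {z ∈ ℍ : τ_z > t}` is open, and `z ↦ g t z` is holomorphic and injective
on `H_t`, mapping `H_t` into the upper half plane. -/
theorem chordal_loewner_flow_holomorphic_injective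
    (W : ℝ → ℝ) (hW : ContinuousOn W (Set.Ici (0 : ℝ)))
    (g : ℝ → ℂ → ℂ) (τ : ℂ → ℝ≥0∞)
    (hτpos : ∀ z : ℂ, 0 < z.im → 0 < τ z)
    (hg0 : ∀ z : ℂ, 0 < z.im → g 0 z = z)
    (hode : ∀ z : ℂ, 0 < z.im → ∀ t : ℝ, 0 ≤ t → ENNReal.ofReal t < τ z →
      g t z ≠ (W t : ℂ) ∧
        HasDerivWithinAt (fun s => g s z) (2 / (g t z - (W t : ℂ)))
          (Set.Ici (0 : ℝ)) t)
    (hmax : ∀ z : ℂ, 0 < z.im → τ z ≠ ⊤ →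
      Tendsto (fun t : ℝ => g t z - (W t : ℂ)) (𝓝[<] (τ z).toReal) (𝓝 0)) :
    ∀ t : ℝ, 0 ≤ t →
      IsOpen {z : ℂ | 0 < z.im ∧ ENNReal.ofReal t < τ z} ∧
      DifferentiableOn ℂ (g t) {z : ℂ | 0 < z.im ∧ ENNReal.ofReal t < τ z} ∧
      Set.InjOn (g t) {z : ℂ | 0 < z.im ∧ ENNReal.ofReal t < τ z} ∧
      Set.MapsTo (g t) {z : ℂ | 0 < z.im ∧ ENNReal.ofReal t < τ z}
        {z : ℂ | 0 < z.im} := by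
  intro t ht
  refine ⟨isOpen_iff_mem_nhds.2 ?_, ?_, ?_, ?_⟩
  · rintro z ⟨hz, hτz⟩
    obtain ⟨_, _, _, hnear⟩ := eventually_flow_near hW hτpos hg0 hode hmax ht hz hτz
    exact hnear.mono fun w hw => ⟨hw.1, hw.2.1⟩
  · rintro z ⟨hz, hτz⟩
    exact (hasDerivAt_flow hW hτpos hg0 hode hmax ht hz hτz).differentiableAt
      |>.differentiableWithinAt
  · rintro z ⟨hz, hτz⟩ w ⟨hw, hτw⟩ hzw
    have hdiff := flow_sub_flow_eq hW hg0 hode hz hw ht hτz hτw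
    rw [hzw, sub_self, eq_comm, mul_eq_zero] at hdiff
    exact sub_eq_zero.1 (hdiff.resolve_right (Complex.exp_ne_zero _))
  · rintro z ⟨hz, hτz⟩
    rw [mem_ofPred_eq, im_flow_eq hW hg0 hode hz ht hτz]
    exact mul_pos hz (Real.exp_pos _)
end

section
/- Let W : [0,∞) → ℝ be continuous, let g_t denote the chordal Loewner flow, H_t = {z ∈ ℍ : τ_z > t}, and fix z with τ_z > T. Then the complex derivative g_t'(z) = ∂_z g_t(z) exists for t ∈ [0,T], the map t ↦ g_t'(z) is differentiable with ∂_t g_t'(z) = −2 g_t'(z) / (g_t(z) − W_t)², and consequently g_t'(z) = exp( −∫_0^t 2 (g_s(z) − W_s)^{−2} ds ) ≠ 0. -/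
/-!
For two starting points `w, z` the difference `g_t(w) - g_t(z)` solves the linear equation
`h' = a h` with `a_t = -2 / ((g_t(w) - W_t) (g_t(z) - W_t))`, the divided difference of the
Loewner vector field, so `g_t(w) - g_t(z) = (w - z) exp ∫₀ᵗ a`. On `[0, T]` the trajectory of `z`
stays at some distance `2m > 0` from `W`; by a continuity argument the trajectory of every `w`
close enough to `z` then stays at distance `m` from `W`, hence lives past `T`, and the integrands
converge uniformly as `w → z`. The difference quotients `exp ∫₀ᵗ a` therefore converge to
`exp ∫₀ᵗ -2 (g_s(z) - W_s)⁻²`, and the time derivative is the fundamental theorem of calculus.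
-/

open Set Filter Topology intervalIntegral
open scoped ENNReal

theorem hasDerivWithinAt_integral_Icc {E : Type*} [NormedAddCommGroup E] [NormedSpace ℝ E]
    [CompleteSpace E] {f : ℝ → E} {a b t : ℝ} (hf : ContinuousOn f (Icc a b)) (ht : t ∈ Icc a b) :
    HasDerivWithinAt (fun u => ∫ s in a..u, f s) (f t) (Icc a b) t := by
  have : Fact (t ∈ Icc a b) := ⟨ht⟩
  refine integral_hasDerivWithinAt_right ?_ (hf.stronglyMeasurableAtFilter_nhdsWithin
    measurableSet_Icc t) (hf t ht)
  exact (hf.mono (by rw [uIcc_of_le ht.1]; exact Icc_subset_Icc le_rfl ht.2)).intervalIntegrable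

theorem eq_mul_cexp_integral_of_hasDerivWithinAt {a b : ℝ} {h c : ℝ → ℂ}
    (hc : ContinuousOn c (Icc a b))
    (hh : ∀ t ∈ Icc a b, HasDerivWithinAt h (c t * h t) (Icc a b) t) :
    ∀ t ∈ Icc a b, h t = h a * Complex.exp (∫ s in a..t, c s) := by
  set F : ℝ → ℂ := fun t => h t * Complex.exp (-∫ s in a..t, c s)
  have hF : ∀ t ∈ Icc a b, HasDerivWithinAt F 0 (Icc a b) t := fun t ht => by
    have hE : HasDerivWithinAt (fun u => Complex.exp (-∫ s in a..u, c s))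
        (Complex.exp (-∫ s in a..t, c s) * -c t) (Icc a b) t :=
      (hasDerivWithinAt_integral_Icc hc ht).neg.cexp
    exact ((hh t ht).mul hE).congr_deriv (by ring)
  have hconst := constant_of_has_deriv_right_zero (fun t ht => (hF t ht).continuousWithinAt)
    fun t ht => (hF t (Ico_subset_Icc_self ht)).mono_of_mem_nhdsWithin (Icc_mem_nhdsGE_of_mem ht)
  intro t ht
  have hFt : F t = h a := by simpa [F] using hconst t ht
  rw [← hFt, mul_assoc, ← Complex.exp_add, neg_add_cancel, Complex.exp_zero, mul_one]

theorem forall_lt_of_bootstrap {f : ℝ → ℝ} {a b c : ℝ} (hf : ContinuousOn f (Icc a b))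
    (ha : f a < c) (hstep : ∀ t ∈ Icc a b, (∀ s ∈ Icc a t, f s ≤ c) → f t < c) :
    ∀ t ∈ Icc a b, f t < c := by
  by_contra! hbad
  set S := Icc a b ∩ f ⁻¹' Ici c
  have hS : IsClosed S := hf.preimage_isClosed_of_isClosed isClosed_Icc isClosed_Ici
  have hSne : S.Nonempty := hbad
  have hSbdd : BddBelow S := ⟨a, fun s hs => hs.1.1⟩
  -- `sInf S` is the first time at which `f` reaches `c`.
  have ht₀ : sInf S ∈ S := hS.csInf_mem hSne hSbdd
  have hbefore : ∀ s ∈ Ico a (sInf S), f s < c := fun s hs => by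
    by_contra! hcs
    exact (csInf_le hSbdd ⟨⟨hs.1, hs.2.le.trans ht₀.1.2⟩, hcs⟩).not_gt hs.2
  have ha₀ : a < sInf S := ht₀.1.1.lt_of_ne fun h => (h ▸ ht₀.2 : c ≤ f a).not_gt ha
  have hIco : Ico a (sInf S) ⊆ Icc a b := fun s hs => ⟨hs.1, hs.2.le.trans ht₀.1.2⟩
  have hle : f (sInf S) ≤ c := by
    have := right_nhdsWithin_Ico_neBot ha₀
    exact le_of_tendsto ((hf _ ht₀.1).mono hIco)
      (eventually_nhdsWithin_of_forall fun s hs => (hbefore s hs).le)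
  refine (hstep _ ht₀.1 fun s hs => ?_).not_ge ht₀.2
  rcases hs.2.lt_or_eq with hs' | rfl
  exacts [(hbefore s ⟨hs.1, hs'⟩).le, hle]

theorem norm_cexp_integral_le {f : ℝ → ℂ} {a b K : ℝ} (hab : a ≤ b)
    (hf : ∀ s ∈ Ioc a b, ‖f s‖ ≤ K) :
    ‖Complex.exp (∫ s in a..b, f s)‖ ≤ Real.exp (K * (b - a)) := by
  have hint : ‖∫ s in a..b, f s‖ ≤ K * |b - a| :=
    norm_integral_le_of_norm_le_const (by rwa [uIoc_of_le hab])
  rw [Complex.norm_exp, abs_of_nonneg (sub_nonneg.2 hab)] at *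
  exact Real.exp_le_exp.2 ((Complex.re_le_norm _).trans hint)

theorem hasDerivWithinAt_of_eqOn_cexp_integral {D f : ℝ → ℂ} {a b t : ℝ}
    (hf : ContinuousOn f (Icc a b)) (hD : ∀ u ∈ Icc a b, D u = Complex.exp (∫ s in a..u, f s))
    (ht : t ∈ Icc a b) : HasDerivWithinAt D (D t * f t) (Icc a b) t := by
  rw [hD t ht]
  exact (hasDerivWithinAt_integral_Icc hf ht).cexp.congr hD (hD t ht)

/-- The divided difference of the Loewner vector field `ζ ↦ 2 / (ζ - w)` between `p` and `q`
(its derivative at `p` when `p = q`). -/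
noncomputable def loewnerFieldSlope (w p q : ℂ) : ℂ := -2 / ((p - w) * (q - w))

theorem two_div_sub_two_div_eq_loewnerFieldSlope_mul {w p q : ℂ} (hp : p ≠ w) (hq : q ≠ w) :
    2 / (p - w) - 2 / (q - w) = loewnerFieldSlope w p q * (p - q) := by
  have hp' : p - w ≠ 0 := sub_ne_zero.2 hp
  have hq' : q - w ≠ 0 := sub_ne_zero.2 hq
  rw [loewnerFieldSlope]
  field_simp
  ring

theorem loewnerFieldSlope_self (w p : ℂ) : loewnerFieldSlope w p p = -(2 * (p - w) ^ (-2 : ℤ)) := by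
  rw [loewnerFieldSlope, zpow_neg, ← sq, zpow_ofNat, neg_div, div_eq_mul_inv]

theorem norm_loewnerFieldSlope_le {w p q : ℂ} {m : ℝ} (hm : 0 < m) (hp : m ≤ ‖p - w‖)
    (hq : m ≤ ‖q - w‖) : ‖loewnerFieldSlope w p q‖ ≤ 2 / m ^ 2 := by
  rw [loewnerFieldSlope, norm_div, norm_mul, norm_neg, Complex.norm_two, sq]
  gcongr

theorem norm_loewnerFieldSlope_sub_self_le {w p q : ℂ} {m : ℝ} (hm : 0 < m) (hp : m ≤ ‖p - w‖)
    (hq : m ≤ ‖q - w‖) :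
    ‖loewnerFieldSlope w p q - loewnerFieldSlope w q q‖ ≤ 2 * ‖p - q‖ / m ^ 3 := by
  have hp' : p - w ≠ 0 := norm_pos_iff.1 (hm.trans_le hp)
  have hq' : q - w ≠ 0 := norm_pos_iff.1 (hm.trans_le hq)
  have hdiff : loewnerFieldSlope w p q - loewnerFieldSlope w q q
      = 2 * (p - q) / ((p - w) * (q - w) ^ 2) := by
    simp only [loewnerFieldSlope]
    field_simp
    ring
  rw [hdiff, norm_div, norm_mul, norm_mul, norm_pow, Complex.norm_two, pow_succ' m 2]
  gcongr

def SolvesLoewnerOn (W : ℝ → ℝ) (γ : ℝ → ℂ) (L : ℝ) : Prop :=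
  ∀ t ∈ Icc 0 L, γ t ≠ W t ∧ HasDerivWithinAt γ (2 / (γ t - W t)) (Icc 0 L) t

namespace SolvesLoewnerOn

variable {W : ℝ → ℝ} {γ γ₁ γ₂ : ℝ → ℂ} {L : ℝ}

theorem mono (h : SolvesLoewnerOn W γ L) {L' : ℝ} (hL : L' ≤ L) : SolvesLoewnerOn W γ L' :=
  fun t ht => ⟨(h t ⟨ht.1, ht.2.trans hL⟩).1,
    (h t ⟨ht.1, ht.2.trans hL⟩).2.mono (Icc_subset_Icc_right hL)⟩

theorem continuousOn (h : SolvesLoewnerOn W γ L) : ContinuousOn γ (Icc 0 L) :=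
  fun t ht => (h t ht).2.continuousWithinAt

theorem exists_pos_le_norm_sub (h : SolvesLoewnerOn W γ L) (hW : ContinuousOn W (Icc 0 L))
    (hL : 0 ≤ L) : ∃ δ > 0, ∀ s ∈ Icc 0 L, δ ≤ ‖γ s - W s‖ := by
  obtain ⟨s₀, hs₀, hmin⟩ := isCompact_Icc.exists_isMinOn (nonempty_Icc.2 hL)
    (h.continuousOn.sub (Complex.continuous_ofReal.comp_continuousOn hW)).norm
  exact ⟨_, norm_pos_iff.2 (sub_ne_zero.2 (h s₀ hs₀).1), fun s hs => hmin hs⟩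

theorem continuousOn_loewnerFieldSlope (h₁ : SolvesLoewnerOn W γ₁ L)
    (h₂ : SolvesLoewnerOn W γ₂ L) (hW : ContinuousOn W (Icc 0 L)) :
    ContinuousOn (fun s => loewnerFieldSlope (W s) (γ₁ s) (γ₂ s)) (Icc 0 L) := by
  have hW' := Complex.continuous_ofReal.comp_continuousOn hW
  refine continuousOn_const.div ((h₁.continuousOn.sub hW').mul (h₂.continuousOn.sub hW'))
    fun s hs => mul_ne_zero (sub_ne_zero.2 (h₁ s hs).1) (sub_ne_zero.2 (h₂ s hs).1)

theorem sub_eq_mul_cexp (h₁ : SolvesLoewnerOn W γ₁ L) (h₂ : SolvesLoewnerOn W γ₂ L)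
    (hW : ContinuousOn W (Icc 0 L)) : ∀ t ∈ Icc 0 L, γ₁ t - γ₂ t =
      (γ₁ 0 - γ₂ 0) * Complex.exp (∫ s in 0..t, loewnerFieldSlope (W s) (γ₁ s) (γ₂ s)) :=
  eq_mul_cexp_integral_of_hasDerivWithinAt (h₁.continuousOn_loewnerFieldSlope h₂ hW)
    fun t ht => ((h₁ t ht).2.sub (h₂ t ht).2).congr_deriv
      (two_div_sub_two_div_eq_loewnerFieldSlope_mul (h₁ t ht).1 (h₂ t ht).1)

theorem norm_sub_le (h₁ : SolvesLoewnerOn W γ₁ L) (h₂ : SolvesLoewnerOn W γ₂ L)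
    (hW : ContinuousOn W (Icc 0 L)) {m : ℝ} (hm : 0 < m)
    (hm₁ : ∀ s ∈ Icc 0 L, m ≤ ‖γ₁ s - W s‖) (hm₂ : ∀ s ∈ Icc 0 L, m ≤ ‖γ₂ s - W s‖) :
    ∀ t ∈ Icc 0 L, ‖γ₁ t - γ₂ t‖ ≤ ‖γ₁ 0 - γ₂ 0‖ * Real.exp (2 / m ^ 2 * L) := by
  intro t ht
  have hexp := norm_cexp_integral_le ht.1 fun s hs =>
    have hs' : s ∈ Icc 0 L := ⟨hs.1.le, hs.2.trans ht.2⟩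
    norm_loewnerFieldSlope_le hm (hm₁ s hs') (hm₂ s hs')
  rw [sub_zero] at hexp
  rw [h₁.sub_eq_mul_cexp h₂ hW t ht, norm_mul]
  gcongr
  exact hexp.trans (Real.exp_le_exp.2 (by gcongr; exact ht.2))

theorem lt_norm_sub (h₁ : SolvesLoewnerOn W γ₁ L) (h₂ : SolvesLoewnerOn W γ₂ L)
    (hW : ContinuousOn W (Icc 0 L)) {m : ℝ} (hm : 0 < m)
    (hm₂ : ∀ s ∈ Icc 0 L, 2 * m ≤ ‖γ₂ s - W s‖)
    (h0 : ‖γ₁ 0 - γ₂ 0‖ * Real.exp (2 / m ^ 2 * L) < m) :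
    ∀ t ∈ Icc 0 L, m < ‖γ₁ t - W t‖ := by
  have htri : ∀ s ∈ Icc 0 L, 2 * m - ‖γ₁ s - γ₂ s‖ ≤ ‖γ₁ s - W s‖ := fun s hs => by
    have := norm_sub_norm_le (γ₂ s - W s) (γ₂ s - γ₁ s)
    rw [sub_sub_sub_cancel_left, norm_sub_rev (γ₂ s) (γ₁ s)] at this
    linarith [hm₂ s hs]
  intro t ht
  have hL : 0 ≤ L := ht.1.trans ht.2
  have hclose : ‖γ₁ t - γ₂ t‖ < m := by
    refine forall_lt_of_bootstrap (f := fun s => ‖γ₁ s - γ₂ s‖)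
      (h₁.continuousOn.sub h₂.continuousOn).norm
      ((le_mul_of_one_le_right (norm_nonneg _) (Real.one_le_exp (by positivity))).trans_lt h0)
      (fun u hu hbound => ?_) t ht
    have hIcc : Icc 0 u ⊆ Icc 0 L := Icc_subset_Icc_right hu.2
    have hm₁ : ∀ s ∈ Icc 0 u, m ≤ ‖γ₁ s - W s‖ := fun s hs => by
      linarith [htri s (hIcc hs), hbound s hs]
    calc ‖γ₁ u - γ₂ u‖ ≤ ‖γ₁ 0 - γ₂ 0‖ * Real.exp (2 / m ^ 2 * u) :=
          (h₁.mono hu.2).norm_sub_le (h₂.mono hu.2) (hW.mono hIcc) hm hm₁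
            (fun s hs => by linarith [hm₂ s (hIcc hs)]) u (right_mem_Icc.2 hu.1)
      _ ≤ ‖γ₁ 0 - γ₂ 0‖ * Real.exp (2 / m ^ 2 * L) := by gcongr; exact hu.2
      _ < m := h0
  linarith [htri t ht]

theorem norm_integral_loewnerFieldSlope_sub_le (h₁ : SolvesLoewnerOn W γ₁ L)
    (h₂ : SolvesLoewnerOn W γ₂ L) (hW : ContinuousOn W (Icc 0 L)) {m : ℝ} (hm : 0 < m)
    (hm₁ : ∀ s ∈ Icc 0 L, m ≤ ‖γ₁ s - W s‖) (hm₂ : ∀ s ∈ Icc 0 L, m ≤ ‖γ₂ s - W s‖) :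
    ∀ t ∈ Icc 0 L, ‖(∫ s in 0..t, loewnerFieldSlope (W s) (γ₁ s) (γ₂ s)) -
        ∫ s in 0..t, loewnerFieldSlope (W s) (γ₂ s) (γ₂ s)‖ ≤
      2 * (‖γ₁ 0 - γ₂ 0‖ * Real.exp (2 / m ^ 2 * L)) / m ^ 3 * L := by
  intro t ht
  have hIcc : Icc 0 t ⊆ Icc 0 L := Icc_subset_Icc_right ht.2
  have hint : ∀ {γ : ℝ → ℂ}, SolvesLoewnerOn W γ L → IntervalIntegrable
      (fun s => loewnerFieldSlope (W s) (γ s) (γ₂ s)) MeasureTheory.volume 0 t := fun h =>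
    ((h.continuousOn_loewnerFieldSlope h₂ hW).mono hIcc).intervalIntegrable_of_Icc ht.1
  rw [← integral_sub (hint h₁) (hint h₂)]
  have hbound := norm_integral_le_of_norm_le_const (a := 0) (b := t)
      (C := 2 * (‖γ₁ 0 - γ₂ 0‖ * Real.exp (2 / m ^ 2 * L)) / m ^ 3) fun s hs => by
    rw [uIoc_of_le ht.1] at hs
    have hsL : s ∈ Icc 0 L := ⟨hs.1.le, hs.2.trans ht.2⟩
    exact (norm_loewnerFieldSlope_sub_self_le hm (hm₁ s hsL) (hm₂ s hsL)).trans
      (by gcongr; exact h₁.norm_sub_le h₂ hW hm hm₁ hm₂ s hsL)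
  rw [sub_zero, abs_of_nonneg ht.1] at hbound
  exact hbound.trans (by gcongr; exact ht.2)

end SolvesLoewnerOn

theorem SolvesLoewnerOn.ofReal_lt_lifetime {W : ℝ → ℝ} {γ γ₀ : ℝ → ℂ} {σ : ℝ≥0∞} {T m : ℝ}
    (hγ₀ : SolvesLoewnerOn W γ₀ T) (hW : ContinuousOn W (Icc 0 T)) (hT : 0 ≤ T) (hm : 0 < m)
    (hm₀ : ∀ s ∈ Icc 0 T, 2 * m ≤ ‖γ₀ s - W s‖) (hσ : 0 < σ)
    (hγ : ∀ L, ENNReal.ofReal L < σ → SolvesLoewnerOn W γ L)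
    (hblow : σ ≠ ⊤ → Tendsto (fun t => γ t - W t) (𝓝[<] σ.toReal) (𝓝 0))
    (h0 : ‖γ 0 - γ₀ 0‖ * Real.exp (2 / m ^ 2 * T) < m) : ENNReal.ofReal T < σ := by
  by_contra! hσT
  have hσtop : σ ≠ ⊤ := ne_top_of_le_ne_top ENNReal.ofReal_ne_top hσT
  have hσT' : σ.toReal ≤ T := ENNReal.toReal_le_of_le_ofReal hT hσT
  have hfar : ∀ L ∈ Ioo 0 σ.toReal, m < ‖γ L - W L‖ := fun L hL => by
    have hLT : L ≤ T := hL.2.le.trans hσT'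
    refine (hγ L ((ENNReal.ofReal_lt_iff_lt_toReal hL.1.le hσtop).2 hL.2)).lt_norm_sub
      (hγ₀.mono hLT) (hW.mono (Icc_subset_Icc_right hLT)) hm
      (fun s hs => hm₀ s ⟨hs.1, hs.2.trans hLT⟩) ?_ L (right_mem_Icc.2 hL.1.le)
    exact lt_of_le_of_lt (by gcongr) h0
  have hnear : ∀ᶠ L in 𝓝[<] σ.toReal, ‖γ L - W L‖ < m := by
    have hlim := (hblow hσtop).norm
    rw [norm_zero] at hlim
    exact hlim.eventually (gt_mem_nhds hm)
  obtain ⟨L, hL, hLm⟩ :=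
    ((show ∀ᶠ L in 𝓝[<] σ.toReal, L ∈ Ioo 0 σ.toReal from
      Ioo_mem_nhdsLT (ENNReal.toReal_pos hσ.ne' hσtop)).and hnear).exists
  exact (hfar L hL).not_gt hLm

theorem exists_pos_eventually_solvesLoewnerOn {W : ℝ → ℝ} {G : ℝ → ℂ → ℂ} {τ : ℂ → ℝ≥0∞}
    {U : Set ℂ} {z : ℂ} {T : ℝ} (hU : IsOpen U) (hW : ContinuousOn W (Icc 0 T)) (hT : 0 ≤ T)
    (hτpos : ∀ w ∈ U, 0 < τ w) (hG0 : ∀ w ∈ U, G 0 w = w)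
    (hsol : ∀ w ∈ U, ∀ L, ENNReal.ofReal L < τ w → SolvesLoewnerOn W (fun s => G s w) L)
    (hblow : ∀ w ∈ U, τ w ≠ ⊤ → Tendsto (fun t => G t w - W t) (𝓝[<] (τ w).toReal) (𝓝 0))
    (hz : z ∈ U) (hτ : ENNReal.ofReal T < τ z) :
    ∃ m > 0, ∀ᶠ w in 𝓝 z,
      SolvesLoewnerOn W (fun s => G s w) T ∧ ∀ s ∈ Icc 0 T, m ≤ ‖G s w - W s‖ := by
  have hzsol := hsol z hz T hτ
  obtain ⟨δ, hδ, hzδ⟩ := hzsol.exists_pos_le_norm_sub hW hT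
  have hm : 0 < δ / 2 := half_pos hδ
  have hzm : ∀ s ∈ Icc 0 T, 2 * (δ / 2) ≤ ‖G s z - W s‖ := by
    simpa only [mul_div_cancel₀ δ two_ne_zero] using hzδ
  have hclose : ∀ᶠ w in 𝓝 z, ‖w - z‖ * Real.exp (2 / (δ / 2) ^ 2 * T) < δ / 2 := by
    have hcont : Continuous fun w : ℂ => ‖w - z‖ * Real.exp (2 / (δ / 2) ^ 2 * T) := by fun_prop
    exact hcont.continuousAt.eventually_lt continuousAt_const (by simpa using hm)
  refine ⟨δ / 2, hm, ?_⟩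
  filter_upwards [hU.mem_nhds hz, hclose] with w hw hwz
  rw [← hG0 w hw, ← hG0 z hz] at hwz
  have hτw := hzsol.ofReal_lt_lifetime hW hT hm hzm (hτpos w hw) (hsol w hw) (hblow w hw) hwz
  exact ⟨hsol w hw T hτw, fun s hs =>
    ((hsol w hw T hτw).lt_norm_sub hzsol hW hm hzm hwz s hs).le⟩

theorem hasDerivAt_of_eventually_solvesLoewnerOn {W : ℝ → ℝ} {G : ℝ → ℂ → ℂ} {z : ℂ} {T m : ℝ}
    (hW : ContinuousOn W (Icc 0 T)) (hm : 0 < m)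
    (hsol : ∀ᶠ w in 𝓝 z,
      SolvesLoewnerOn W (fun s => G s w) T ∧ ∀ s ∈ Icc 0 T, m ≤ ‖G s w - W s‖)
    (h0 : ∀ᶠ w in 𝓝 z, G 0 w = w) {t : ℝ} (ht : t ∈ Icc 0 T) :
    HasDerivAt (G t) (Complex.exp (∫ s in 0..t, loewnerFieldSlope (W s) (G s z) (G s z))) z := by
  obtain ⟨hz, hzm⟩ := hsol.self_of_nhds
  have hslope : slope (G t) z =ᶠ[𝓝[≠] z]
      fun w => Complex.exp (∫ s in 0..t, loewnerFieldSlope (W s) (G s w) (G s z)) := by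
    filter_upwards [nhdsWithin_le_nhds (hsol.and h0), self_mem_nhdsWithin]
      with w ⟨⟨hw, _⟩, hw0⟩ hwz
    rw [slope_def_field, hw.sub_eq_mul_cexp hz hW t ht, hw0, h0.self_of_nhds,
      mul_div_cancel_left₀ _ (sub_ne_zero.2 hwz)]
  have hint : Tendsto (fun w => ∫ s in 0..t, loewnerFieldSlope (W s) (G s w) (G s z)) (𝓝 z)
      (𝓝 (∫ s in 0..t, loewnerFieldSlope (W s) (G s z) (G s z))) := by
    rw [tendsto_iff_norm_sub_tendsto_zero]
    refine squeeze_zero' (Eventually.of_forall fun _ => norm_nonneg _) ?_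
      (g := fun w => 2 * (‖w - z‖ * Real.exp (2 / m ^ 2 * T)) / m ^ 3 * T) ?_
    · filter_upwards [hsol, h0] with w ⟨hw, hwm⟩ hw0
      simpa only [hw0, h0.self_of_nhds] using
        hw.norm_integral_loewnerFieldSlope_sub_le hz hW hm hwm hzm t ht
    · have hcont : Continuous fun w => 2 * (‖w - z‖ * Real.exp (2 / m ^ 2 * T)) / m ^ 3 * T := by
        fun_prop
      simpa using hcont.tendsto z
  rw [hasDerivAt_iff_tendsto_slope, tendsto_congr' hslope]
  exact (Complex.continuous_exp.tendsto _).comp (hint.mono_left nhdsWithin_le_nhds)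

theorem chordal_loewner_spatial_derivative_general
    (W : ℝ → ℝ) (hW : ContinuousOn W (Set.Ici (0 : ℝ)))
    (g : ℝ → ℂ → ℂ) (τ : ℂ → ℝ≥0∞)
    (hτpos : ∀ z : ℂ, 0 < z.im → 0 < τ z)
    (hg0 : ∀ z : ℂ, 0 < z.im → g 0 z = z)
    (hode : ∀ z : ℂ, 0 < z.im → ∀ t : ℝ, 0 ≤ t → ENNReal.ofReal t < τ z →
      g t z ≠ (W t : ℂ) ∧
        HasDerivWithinAt (fun s => g s z) (2 / (g t z - (W t : ℂ)))
          (Set.Ici (0 : ℝ)) t)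
    (hmax : ∀ z : ℂ, 0 < z.im → τ z ≠ ⊤ →
      Tendsto (fun t : ℝ => g t z - (W t : ℂ)) (𝓝[<] (τ z).toReal) (𝓝 0))
    (T : ℝ)
    (z : ℂ) (hz : 0 < z.im) (hτ : ENNReal.ofReal T < τ z) :
    ∀ t ∈ Set.Icc (0 : ℝ) T,
      DifferentiableAt ℂ (g t) z ∧
      HasDerivWithinAt (fun s => deriv (g s) z)
        (-2 * deriv (g t) z / (g t z - (W t : ℂ)) ^ 2)
        (Set.Icc (0 : ℝ) T) t ∧
      deriv (g t) z =
        Complex.exp (-∫ s in (0 : ℝ)..t, 2 * (g s z - (W s : ℂ)) ^ (-2 : ℤ)) ∧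
      deriv (g t) z ≠ 0 := by
  intro t ht
  have hT : 0 ≤ T := ht.1.trans ht.2
  have hWT : ContinuousOn W (Icc 0 T) := hW.mono Icc_subset_Ici_self
  have hH : IsOpen {w : ℂ | 0 < w.im} := isOpen_lt continuous_const Complex.continuous_im
  have hsol : ∀ w : ℂ, 0 < w.im → ∀ L, ENNReal.ofReal L < τ w →
      SolvesLoewnerOn W (fun s => g s w) L := fun w hw L hL s hs =>
    (hode w hw s hs.1 ((ENNReal.ofReal_le_ofReal hs.2).trans_lt hL)).imp_right
      fun h => h.mono Icc_subset_Ici_self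
  obtain ⟨m, hm, hnear⟩ :=
    exists_pos_eventually_solvesLoewnerOn hH hWT hT hτpos hg0 hsol hmax hz hτ
  have hderiv : ∀ u ∈ Icc 0 T, HasDerivAt (g u)
      (Complex.exp (∫ s in 0..u, loewnerFieldSlope (W s) (g s z) (g s z))) z := fun u hu =>
    hasDerivAt_of_eventually_solvesLoewnerOn hWT hm hnear
      (eventually_of_mem (hH.mem_nhds hz) hg0) hu
  have hD := fun u hu => (hderiv u hu).deriv
  refine ⟨(hderiv t ht).differentiableAt, ?_, ?_, hD t ht ▸ Complex.exp_ne_zero _⟩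
  · have hzsol := hsol z hz T hτ
    refine (hasDerivWithinAt_of_eqOn_cexp_integral
      (hzsol.continuousOn_loewnerFieldSlope hzsol hWT) hD ht).congr_deriv ?_
    rw [loewnerFieldSlope]
    field_simp
  · simp only [hD t ht, loewnerFieldSlope_self, integral_neg]

/-- For the chordal Loewner flow `g t z` with continuous real driving term `W`
and a point `z` with lifetime `τ z > T`: the complex derivative `g_t'(z) = deriv (g t) z`
exists for `t ∈ [0, T]`, the map `t ↦ g_t'(z)` is differentiable with
`∂ₜ g_t'(z) = -2 g_t'(z) / (g_t(z) - W_t)²`, and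
`g_t'(z) = exp(-∫₀ᵗ 2 (g_s(z) - W_s)⁻² ds) ≠ 0`. -/
theorem chordal_loewner_spatial_derivative
    (W : ℝ → ℝ) (hW : ContinuousOn W (Set.Ici (0 : ℝ)))
    (g : ℝ → ℂ → ℂ) (τ : ℂ → ℝ≥0∞)
    (hτpos : ∀ z : ℂ, 0 < z.im → 0 < τ z)
    (hg0 : ∀ z : ℂ, 0 < z.im → g 0 z = z)
    (hode : ∀ z : ℂ, 0 < z.im → ∀ t : ℝ, 0 ≤ t → ENNReal.ofReal t < τ z →
      g t z ≠ (W t : ℂ) ∧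
        HasDerivWithinAt (fun s => g s z) (2 / (g t z - (W t : ℂ)))
          (Set.Ici (0 : ℝ)) t)
    (hmax : ∀ z : ℂ, 0 < z.im → τ z ≠ ⊤ →
      Tendsto (fun t : ℝ => g t z - (W t : ℂ)) (𝓝[<] (τ z).toReal) (𝓝 0))
    (T : ℝ) (hT : 0 ≤ T)
    (z : ℂ) (hz : 0 < z.im) (hτ : ENNReal.ofReal T < τ z) :
    ∀ t ∈ Set.Icc (0 : ℝ) T,
      DifferentiableAt ℂ (g t) z ∧
      HasDerivWithinAt (fun s => deriv (g s) z)
        (-2 * deriv (g t) z / (g t z - (W t : ℂ)) ^ 2)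
        (Set.Icc (0 : ℝ) T) t ∧
      deriv (g t) z =
        Complex.exp (-∫ s in (0 : ℝ)..t, 2 * (g s z - (W s : ℂ)) ^ (-2 : ℤ)) ∧
      deriv (g t) z ≠ 0 :=
  chordal_loewner_spatial_derivative_general W hW g τ hτpos hg0 hode hmax T z hz hτ
end

section
/- Let W : [0,∞) → ℂ be continuous with |W_t| = 1 for all t, let z ∈ ℂ with 0 < |z| < 1, and let g : [0, τ) → ℂ be the maximal solution of the radial Loewner equation ∂_t g(t) = −g(t)(g(t) + W_t)/(g(t) − W_t) with g(0) = z. Then for all t ∈ [0, τ): |g(t)| < 1, and d/dt |g(t)|² = 2 |g(t)|² (1 − |g(t)|²) / |g(t) − W_t|² > 0; in particular t ↦ |g(t)| is strictly increasing. -/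
/-!
Write `r = ‖g‖²`. Since `⟪z, Ψ(w, z)⟫ = ‖z‖² (‖w‖² - ‖z‖²) / ‖z - w‖²`, on the unit circle
the Loewner equation gives the logistic-type equation `r' = c r (1 - r)` with
`c = 2 / ‖g - W‖²` continuous. Both `r` and `1 - r` therefore solve linear equations `u' = a u`
with continuous `a`, and by uniqueness such a solution cannot vanish without vanishing at time `0`;
hence `0 < r < 1` throughout, so `r' > 0` and `r` is strictly increasing.
-/

open Set
open scoped ENNReal ComplexConjugate

theorem pos_of_hasDerivWithinAt_eq_mul_self {u a : ℝ → ℝ} {t₀ t₁ : ℝ}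
    (hu : ContinuousOn u (Icc t₀ t₁)) (ha : ContinuousOn a (Icc t₀ t₁))
    (hu' : ∀ t ∈ Ioc t₀ t₁, HasDerivWithinAt u (a t * u t) (Iic t) t)
    (h₀ : 0 < u t₀) {t : ℝ} (ht : t ∈ Icc t₀ t₁) : 0 < u t := by
  obtain ⟨K, hK⟩ := isCompact_Icc.exists_bound_of_continuousOn ha
  by_contra! hut
  obtain ⟨s, hs, hus⟩ : ∃ s ∈ Icc t₀ t, u s = 0 :=
    intermediate_value_Icc' ht.1 (hu.mono (Icc_subset_Icc_right ht.2)) ⟨hut, h₀.le⟩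
  have hst : Icc t₀ s ⊆ Icc t₀ t₁ := Icc_subset_Icc_right (hs.2.trans ht.2)
  have hLip : ∀ r ∈ Ioc t₀ s, LipschitzOnWith K.toNNReal (fun x => a r * x) univ := by
    refine fun r hr => (LipschitzWith.of_dist_le_mul fun x y => ?_).lipschitzOnWith
    rw [Real.dist_eq, Real.dist_eq, ← mul_sub, abs_mul]
    gcongr
    exact (hK r (hst (Ioc_subset_Icc_self hr))).trans (le_max_left _ _)
  -- backward uniqueness for `x' = a x`: the zero at `s` forces `u ≡ 0` on `[t₀, s]`
  have hzero : EqOn u 0 (Icc t₀ s) :=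
    ODE_solution_unique_of_mem_Icc_left hLip (hu.mono hst)
      (fun r hr => hu' r (Ioc_subset_Ioc_right (hs.2.trans ht.2) hr)) (fun _ _ => mem_univ _)
      continuousOn_const
      (fun r _ => by rw [Pi.zero_apply, mul_zero]; exact hasDerivWithinAt_const r (Iic r) 0)
      (fun _ _ => mem_univ _) hus
  exact h₀.ne' (hzero (left_mem_Icc.2 hs.1))

theorem mem_Ioo_of_hasDerivWithinAt_logistic {r c : ℝ → ℝ} {t₀ t₁ : ℝ}
    (hr : ContinuousOn r (Icc t₀ t₁)) (hc : ContinuousOn c (Icc t₀ t₁))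
    (hr' : ∀ t ∈ Ioc t₀ t₁, HasDerivWithinAt r (c t * r t * (1 - r t)) (Iic t) t)
    (h₀ : r t₀ ∈ Ioo 0 1) {t : ℝ} (ht : t ∈ Icc t₀ t₁) : r t ∈ Ioo 0 1 := by
  have hpos : 0 < r t :=
    pos_of_hasDerivWithinAt_eq_mul_self (a := fun t => c t * (1 - r t)) hr
      (hc.mul (continuousOn_const.sub hr))
      (fun s hs => (hr' s hs).congr_deriv (by ring)) h₀.1 ht
  have hlt : 0 < 1 - r t :=
    pos_of_hasDerivWithinAt_eq_mul_self (u := fun t => 1 - r t) (a := fun t => -(c t * r t))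
      (continuousOn_const.sub hr) (hc.mul hr).neg
      (fun s hs => ((hr' s hs).const_sub 1).congr_deriv (by ring)) (sub_pos.2 h₀.2) ht
  exact ⟨hpos, sub_pos.1 hlt⟩

theorem Complex.re_add_div_sub (z w : ℂ) :
    ((z + w) / (z - w)).re = (‖z‖ ^ 2 - ‖w‖ ^ 2) / ‖z - w‖ ^ 2 := by
  simp only [Complex.div_re, Complex.sq_norm, Complex.normSq_apply, Complex.add_re,
    Complex.add_im, Complex.sub_re, Complex.sub_im]
  ring

/-- `Ψ_𝔻(w, z)`. -/
noncomputable def radialLoewnerField (w z : ℂ) : ℂ := -z * (z + w) / (z - w)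

theorem inner_radialLoewnerField (w z : ℂ) :
    inner ℝ z (radialLoewnerField w z) =
      ‖z‖ ^ 2 * (‖w‖ ^ 2 - ‖z‖ ^ 2) / ‖z - w‖ ^ 2 := by
  have : radialLoewnerField w z * conj z = -(‖z‖ ^ 2 : ℝ) * ((z + w) / (z - w)) := by
    rw [Complex.ofReal_pow, ← Complex.mul_conj', radialLoewnerField]
    ring
  rw [Complex.inner, this, ← Complex.ofReal_neg, Complex.re_ofReal_mul, Complex.re_add_div_sub]
  ring

theorem HasDerivWithinAt.norm_sq_of_radialLoewner {g : ℝ → ℂ} {w : ℂ} {s : Set ℝ}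
    {t : ℝ}
    (hg : HasDerivWithinAt g (radialLoewnerField w (g t)) s t) (hw : ‖w‖ = 1) :
    HasDerivWithinAt (fun s => ‖g s‖ ^ 2)
      (2 * ‖g t‖ ^ 2 * (1 - ‖g t‖ ^ 2) / ‖g t - w‖ ^ 2) s t := by
  convert hg.norm_sq using 1
  rw [inner_radialLoewnerField, hw]
  ring

theorem norm_sq_mem_Ioo_of_radialLoewner {g W : ℝ → ℂ} {t₀ t₁ : ℝ}
    (hg : ContinuousOn g (Icc t₀ t₁)) (hW : ContinuousOn W (Icc t₀ t₁))
    (hW1 : ∀ t ∈ Ioc t₀ t₁, ‖W t‖ = 1) (hgW : ∀ t ∈ Icc t₀ t₁, g t ≠ W t)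
    (hg' : ∀ t ∈ Ioc t₀ t₁, HasDerivWithinAt g (radialLoewnerField (W t) (g t)) (Iic t) t)
    (h₀ : ‖g t₀‖ ^ 2 ∈ Ioo 0 1) {t : ℝ} (ht : t ∈ Icc t₀ t₁) :
    ‖g t‖ ^ 2 ∈ Ioo 0 1 :=
  mem_Ioo_of_hasDerivWithinAt_logistic (r := fun s => ‖g s‖ ^ 2)
    (c := fun s => 2 / ‖g s - W s‖ ^ 2) (hg.norm.pow 2)
    (continuousOn_const.div ((hg.sub hW).norm.pow 2) fun s hs => by
      simpa [sub_eq_zero] using hgW s hs)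
    (fun s hs => ((hg' s hs).norm_sq_of_radialLoewner (hW1 s hs)).congr_deriv (by ring)) h₀ ht

theorem ENNReal.ordConnected_setOf_nonneg_ofReal_lt (τ : ℝ≥0∞) :
    OrdConnected {t : ℝ | 0 ≤ t ∧ ENNReal.ofReal t < τ} :=
  ⟨fun _ hx _ hy _ hu => ⟨hx.1.trans hu.1, (ENNReal.ofReal_le_ofReal hu.2).trans_lt hy.2⟩⟩

/-- For a solution `g` of the radial Loewner equation
`∂ₜ g = -g (g + W)/(g - W)` on `[0, τ)` with `|W_t| = 1`, started at `z` with
`0 < |z| < 1`: the modulus stays below `1`, the squared modulus satisfies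
`d/dt |g(t)|² = 2 |g(t)|² (1 - |g(t)|²)/|g(t) - W_t|² > 0`, and `t ↦ |g(t)|`
is strictly increasing on `[0, τ)`. -/
theorem radial_loewner_abs_strictMono
    (W : ℝ → ℂ) (hW : ContinuousOn W (Set.Ici (0 : ℝ)))
    (hW1 : ∀ t : ℝ, 0 ≤ t → ‖W t‖ = 1)
    (z : ℂ) (hz0 : 0 < ‖z‖) (hz1 : ‖z‖ < 1)
    (τ : ℝ≥0∞) (g : ℝ → ℂ) (hg0 : g 0 = z)
    (hode : ∀ t : ℝ, 0 ≤ t → ENNReal.ofReal t < τ →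
      g t ≠ W t ∧
        HasDerivWithinAt g (-g t * (g t + W t) / (g t - W t))
          (Set.Ici (0 : ℝ)) t) :
    (∀ t : ℝ, 0 ≤ t → ENNReal.ofReal t < τ →
        ‖g t‖ < 1 ∧
        HasDerivWithinAt (fun s => ‖g s‖ ^ 2)
          (2 * ‖g t‖ ^ 2 * (1 - ‖g t‖ ^ 2) /
            ‖g t - W t‖ ^ 2)
          (Set.Ici (0 : ℝ)) t ∧
        0 < 2 * ‖g t‖ ^ 2 * (1 - ‖g t‖ ^ 2) /
            ‖g t - W t‖ ^ 2) ∧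
      StrictMonoOn (fun s => ‖g s‖)
        {t : ℝ | 0 ≤ t ∧ ENNReal.ofReal t < τ} := by
  set S := {t : ℝ | 0 ≤ t ∧ ENNReal.ofReal t < τ}
  have hS : OrdConnected S := ENNReal.ordConnected_setOf_nonneg_ofReal_lt τ
  have hIcc : ∀ t ∈ S, Icc 0 t ⊆ S := fun t ht =>
    hS.out ⟨le_rfl, (ENNReal.ofReal_le_ofReal ht.1).trans_lt ht.2⟩ ht
  have hint : interior S ⊆ Ioi 0 := by
    simpa only [interior_Ici] using interior_mono (show S ⊆ Ici 0 from fun s hs => hs.1)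
  have hg : ContinuousOn g S := fun t ht =>
    (hode t ht.1 ht.2).2.continuousWithinAt.mono fun _ hs => hs.1
  have hg' : ∀ t ∈ S, 0 < t → HasDerivAt g (radialLoewnerField (W t) (g t)) t :=
    fun t ht ht₀ =>
    (hode t ht.1 ht.2).2.hasDerivAt (Ici_mem_nhds ht₀)
  have hr : ∀ t ∈ S, ‖g t‖ ^ 2 ∈ Ioo 0 1 := fun t ht =>
    norm_sq_mem_Ioo_of_radialLoewner (hg.mono (hIcc t ht)) (hW.mono fun _ hs => hs.1)
      (fun s hs => hW1 s hs.1.le) (fun s hs => (hode s (hIcc t ht hs).1 (hIcc t ht hs).2).1)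
      (fun s hs => (hg' s (hIcc t ht (Ioc_subset_Icc_self hs)) hs.1).hasDerivWithinAt)
      (by rw [hg0]; exact ⟨by positivity, by nlinarith⟩) (right_mem_Icc.2 ht.1)
  have hr' : ∀ t ∈ S, HasDerivWithinAt (fun s => ‖g s‖ ^ 2)
      (2 * ‖g t‖ ^ 2 * (1 - ‖g t‖ ^ 2) / ‖g t - W t‖ ^ 2) (Ici 0) t := fun t ht =>
    (hode t ht.1 ht.2).2.norm_sq_of_radialLoewner (hW1 t ht.1)
  have hpos : ∀ t ∈ S, 0 < 2 * ‖g t‖ ^ 2 * (1 - ‖g t‖ ^ 2) / ‖g t - W t‖ ^ 2 :=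
    fun t ht =>
    div_pos (mul_pos (mul_pos two_pos (hr t ht).1) (sub_pos.2 (hr t ht).2))
      (pow_pos (norm_pos_iff.2 (sub_ne_zero.2 (hode t ht.1 ht.2).1)) 2)
  have hmono : StrictMonoOn (fun s => ‖g s‖ ^ 2) S :=
    strictMonoOn_of_hasDerivWithinAt_pos hS.convex (hg.norm.pow 2)
      (fun x hx => ((hr' x (interior_subset hx)).hasDerivAt
        (Ici_mem_nhds (hint hx))).hasDerivWithinAt)
      (fun x hx => hpos x (interior_subset hx))
  refine ⟨fun t ht hτ => ⟨?_, hr' t ⟨ht, hτ⟩, hpos t ⟨ht, hτ⟩⟩, fun s hs t ht hst => ?_⟩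
  · exact (sq_lt_one_iff₀ (norm_nonneg _)).1 (hr t ⟨ht, hτ⟩).2
  · exact lt_of_pow_lt_pow_left₀ 2 (norm_nonneg _) (hmono hs ht hst)
end

section
/- Let λ ∈ ℂ with |λ| = 1, let z₀ = x + iy with y > 0, let φ(z) = λ (z − z₀)/(z − conj(z₀)), let W ∈ ℝ, and set Ŵ = φ(W). Then for every v ∈ ℂ with v ≠ W and v ≠ conj(z₀): i |z₀ − W|² / ( y (W − v) ) = Ŵ⁻¹ Ψ_𝔻(φ(v), Ŵ) − Ŵ⁻¹ Ψ_𝔻(λ, Ŵ), where Ψ_𝔻(w,z) = −z(z+w)/(z−w). -/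
open Complex

noncomputable def PsiD (w z : ℂ) : ℂ := -z * (z + w) / (z - w)

/-! Dividing by `Ŵ` turns each radial field into the Herglotz quotient `-(Ŵ + w)/(Ŵ - w)`.
For a Möbius map `φ(z) = λ (z - a)/(z - b)` these quotients are explicit in the preimages, and
the difference of the quotients at `w = φ(v)` and at `w = λ = φ(∞)` collapses to
`-2 (u - a)(u - b)/((a - b)(u - v))`. With `a = z₀`, `b = conj z₀` and `u = W` real, one has
`a - b = 2 i y` and `(u - a)(u - b) = |z₀ - W|²`, which is the chordal field. -/

theorem inv_mul_PsiD {z : ℂ} (w : ℂ) (hz : z ≠ 0) : z⁻¹ * PsiD w z = -((z + w) / (z - w)) := by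
  rw [PsiD, neg_mul, neg_div, mul_neg, mul_div_assoc, ← mul_assoc, inv_mul_cancel₀ hz, one_mul]

section Moebius

variable {lam a b u v : ℂ}

theorem moebius_add_div_sub (hlam : lam ≠ 0) (hu : u - b ≠ 0) (hv : v - b ≠ 0) :
    (lam * (u - a) / (u - b) + lam * (v - a) / (v - b)) /
        (lam * (u - a) / (u - b) - lam * (v - a) / (v - b)) =
      ((u - a) * (v - b) + (v - a) * (u - b)) / ((a - b) * (u - v)) := by
  rw [div_add_div _ _ hu hv, div_sub_div _ _ hu hv, div_div_div_cancel_right₀ (mul_ne_zero hu hv)]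
  calc _ = lam * ((u - a) * (v - b) + (v - a) * (u - b)) / (lam * ((a - b) * (u - v))) := by
          congr 1 <;> ring
    _ = _ := mul_div_mul_left _ _ hlam

theorem moebius_add_div_sub_infty (hlam : lam ≠ 0) (hu : u - b ≠ 0) :
    (lam * (u - a) / (u - b) + lam) / (lam * (u - a) / (u - b) - lam) =
      (2 * u - a - b) / (b - a) := by
  rw [div_add' _ _ _ hu, div_sub' hu, div_div_div_cancel_right₀ hu]
  calc _ = lam * (2 * u - a - b) / (lam * (b - a)) := by congr 1 <;> ring
    _ = _ := mul_div_mul_left _ _ hlam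

theorem moebius_herglotz_sub_herglotz_infty (hlam : lam ≠ 0) (hab : a - b ≠ 0)
    (hu : u - b ≠ 0) (hv : v - b ≠ 0) (huv : u - v ≠ 0) :
    -((lam * (u - a) / (u - b) + lam * (v - a) / (v - b)) /
        (lam * (u - a) / (u - b) - lam * (v - a) / (v - b))) -
      -((lam * (u - a) / (u - b) + lam) / (lam * (u - a) / (u - b) - lam)) =
      -2 * ((u - a) * (u - b)) / ((a - b) * (u - v)) := by
  have hba : b - a ≠ 0 := by rwa [← neg_sub, neg_ne_zero]
  rw [moebius_add_div_sub hlam hu hv, moebius_add_div_sub_infty hlam hu]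
  field_simp
  ring

end Moebius

theorem sub_mul_sub_conj_ofReal (z : ℂ) (W : ℝ) :
    ((W : ℂ) - z) * ((W : ℂ) - starRingEnd ℂ z) = ((‖z - W‖ ^ 2 : ℝ) : ℂ) := by
  rw [norm_sub_rev, Complex.sq_norm, ← mul_conj, map_sub, conj_ofReal]

theorem ofReal_sub_ne_of_im_ne_zero {z : ℂ} (W : ℝ) (hz : z.im ≠ 0) : (W : ℂ) - z ≠ 0 := by
  intro h
  simpa [hz] using congrArg Complex.im h

/-- Pushing the (time-rescaled) chordal Loewner vector field forward by the Möbius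
map `φ(z) = λ (z - z₀)/(z - conj z₀)`: for `W ∈ ℝ`, `Ŵ = φ(W)` and `v ∉ {W, conj z₀}`,
`i |z₀ - W|²/(y (W - v)) = Ŵ⁻¹ Ψ_𝔻(φ(v), Ŵ) - Ŵ⁻¹ Ψ_𝔻(λ, Ŵ)`. -/
theorem chordal_field_pushforward_radial
    (lam : ℂ) (hlam : ‖lam‖ = 1)
    (z₀ : ℂ) (hz₀ : 0 < z₀.im)
    (W : ℝ) (v : ℂ) (hv1 : v ≠ (W : ℂ)) (hv2 : v ≠ (starRingEnd ℂ) z₀) :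
    Complex.I * (‖z₀ - (W : ℂ)‖ ^ 2 : ℝ) /
        ((z₀.im : ℂ) * ((W : ℂ) - v)) =
      (lam * ((W : ℂ) - z₀) / ((W : ℂ) - (starRingEnd ℂ) z₀))⁻¹ *
          PsiD (lam * (v - z₀) / (v - (starRingEnd ℂ) z₀))
            (lam * ((W : ℂ) - z₀) / ((W : ℂ) - (starRingEnd ℂ) z₀)) -
        (lam * ((W : ℂ) - z₀) / ((W : ℂ) - (starRingEnd ℂ) z₀))⁻¹ *
          PsiD lam
            (lam * ((W : ℂ) - z₀) / ((W : ℂ) - (starRingEnd ℂ) z₀)) := by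
  have hlam0 : lam ≠ 0 := norm_ne_zero_iff.mp (by rw [hlam]; exact one_ne_zero)
  have hy : (z₀.im : ℂ) ≠ 0 := ofReal_ne_zero.mpr hz₀.ne'
  have hWa : (W : ℂ) - z₀ ≠ 0 := ofReal_sub_ne_of_im_ne_zero W hz₀.ne'
  have hWb : (W : ℂ) - starRingEnd ℂ z₀ ≠ 0 :=
    ofReal_sub_ne_of_im_ne_zero W (by simpa using hz₀.ne')
  have hab : z₀ - starRingEnd ℂ z₀ = 2 * z₀.im * I := by rw [sub_conj]; push_cast; ring
  have hŴ : lam * ((W : ℂ) - z₀) / ((W : ℂ) - starRingEnd ℂ z₀) ≠ 0 :=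
    div_ne_zero (mul_ne_zero hlam0 hWa) hWb
  rw [inv_mul_PsiD _ hŴ, inv_mul_PsiD _ hŴ,
    moebius_herglotz_sub_herglotz_infty hlam0 (by rw [hab]; simp [hy]) hWb
      (sub_ne_zero.mpr hv2) (sub_ne_zero.mpr hv1.symm),
    sub_mul_sub_conj_ofReal, hab]
  field_simp
  linear_combination ((‖z₀ - W‖ ^ 2 : ℝ) : ℂ) * I_sq
end
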